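/- arXiv:0909.0081 — 5 statements merged into one kernel-verified Lean document; each statement's English description precedes it below -/
import Mathlib

section
/- Let p be an odd prime, k a natural number, and a, n natural numbers with a < p^n. Then ‖μ_{x^k,-1}(a + p^n ℤ_p) − (-1)^a a^k‖_p ≤ p^{-n}, i.e., μ_{x^k,-1}(a + p^n ℤ_p) ≡ (-1)^a a^k (mod p^n). -/
/-!
Every partial sum has an odd number `p ^ (m - n)` of terms, so subtracting `(-1) ^ a * a ^ k` from it
turns it into the alternating sum of `(a + p ^ n x) ^ k - a ^ k`, each divisible by `p ^ n`. The
ultrametric inequality bounds the partial sums, and the bound passes to the limit.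
-/

open Finset Filter

lemma sum_range_neg_one_pow_add_mul_of_odd {R : Type*} [CommRing R] {N : ℕ} (hN : Odd N)
    (a : ℕ) (c : R) : ∑ x ∈ range N, (-1 : R) ^ (a + x) * c = (-1) ^ a * c := by
  simp_rw [pow_add, mul_assoc, ← mul_sum, ← sum_mul, neg_one_geom_sum,
    if_neg (Nat.not_even_iff_odd.mpr hN), one_mul]

lemma PadicInt.norm_add_pow_sub_pow_le {p : ℕ} [Fact p.Prime] (u v : ℤ_[p]) (k : ℕ) :
    ‖(u + v) ^ k - u ^ k‖ ≤ ‖v‖ := by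
  obtain ⟨w, hw⟩ : v ∣ (u + v) ^ k - u ^ k := by simpa using sub_dvd_pow_sub_pow (u + v) u k
  rw [hw, norm_mul]
  exact mul_le_of_le_one_right (norm_nonneg v) w.norm_le_one

lemma Padic.norm_natCast_add_prime_pow_mul_pow_sub_pow_le (p : ℕ) [Fact p.Prime] (a n x k : ℕ) :
    ‖((a : ℚ_[p]) + (p : ℚ_[p]) ^ n * x) ^ k - (a : ℚ_[p]) ^ k‖ ≤ (p : ℝ) ^ (-(n : ℤ)) := by
  have h := PadicInt.norm_add_pow_sub_pow_le (a : ℤ_[p]) ((p : ℤ_[p]) ^ n * x) k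
  rw [PadicInt.norm_def] at h
  push_cast at h
  refine h.trans ?_
  rw [norm_mul, PadicInt.norm_p_pow]
  exact mul_le_of_le_one_right (by positivity) (PadicInt.norm_le_one _)

theorem fermionic_measure_monomial_congr_general (p : ℕ) [hp : Fact p.Prime] (hodd : Odd p)
    (k a n : ℕ) (μv : ℚ_[p])
    (hμ : Tendsto (fun m => ∑ x ∈ Finset.range (p ^ (m - n)),
        (-1 : ℚ_[p]) ^ (a + x) * ((a : ℚ_[p]) + (p : ℚ_[p]) ^ n * (x : ℚ_[p])) ^ k)
      atTop (nhds μv)) :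
    ‖μv - (-1 : ℚ_[p]) ^ a * (a : ℚ_[p]) ^ k‖ ≤ (p : ℝ) ^ (-(n : ℤ)) := by
  refine le_of_tendsto (hμ.sub_const _).norm (Eventually.of_forall fun m => ?_)
  rw [← sum_range_neg_one_pow_add_mul_of_odd (hodd.pow : Odd (p ^ (m - n))) a,
    ← sum_sub_distrib]
  refine IsUltrametricDist.norm_sum_le_of_forall_le_of_nonneg (by positivity) fun x _ => ?_
  rw [← mul_sub, norm_mul, norm_pow, norm_neg, norm_one, one_pow, one_mul]
  exact Padic.norm_natCast_add_prime_pow_mul_pow_sub_pow_le p a n x k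

theorem fermionic_measure_monomial_congr (p : ℕ) [hp : Fact p.Prime] (hodd : Odd p)
    (k a n : ℕ) (ha : a < p ^ n) (μv : ℚ_[p])
    (hμ : Tendsto (fun m => ∑ x ∈ Finset.range (p ^ (m - n)),
        (-1 : ℚ_[p]) ^ (a + x) * ((a : ℚ_[p]) + (p : ℚ_[p]) ^ n * (x : ℚ_[p])) ^ k)
      atTop (nhds μv)) :
    ‖μv - (-1 : ℚ_[p]) ^ a * (a : ℚ_[p]) ^ k‖ ≤ (p : ℝ) ^ (-(n : ℤ)) :=
  fermionic_measure_monomial_congr_general p (hp := hp) hodd k a n μv hμ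
end

section
/- Let p be an odd prime, k a natural number, and a ∈ ℕ. Then the Radon–Nikodym-type limit f_{μ_{x^k,-1}}(a) := lim_{n→∞} μ_{x^k,-1}(a mod p^n + p^n ℤ_p) exists and equals (-1)^a · a^k. -/
/-! Since `p ^ (m - n)` is odd, the alternating signs `(-1) ^ x` over `x < p ^ (m - n)` sum to `1`,
so once `a < p ^ n` each partial sum defining `μ n` differs from `(-1) ^ a * a ^ k` by an alternating
sum of the differences `(a + p ^ n x) ^ k - a ^ k`. These are multiples of `p ^ n` by `p`-adic
integers, so the ultrametric inequality gives `‖μ n - (-1) ^ a * a ^ k‖ ≤ ‖p‖ ^ n → 0`. -/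

open Finset Filter

lemma sum_neg_one_pow_mul_sub_of_odd {R : Type*} [Ring R] {N : ℕ} (hN : Odd N) (a : ℕ)
    (f : ℕ → R) (c : R) :
    ∑ x ∈ range N, (-1 : R) ^ (a + x) * f x - (-1) ^ a * c =
      ∑ x ∈ range N, (-1 : R) ^ (a + x) * (f x - c) := by
  have hsigns : ∑ x ∈ range N, (-1 : R) ^ x = 1 := by
    rw [neg_one_geom_sum, if_neg (Nat.not_even_iff_odd.2 hN)]
  simp only [mul_sub, sum_sub_distrib, pow_add, mul_assoc, ← mul_sum, ← sum_mul, hsigns, one_mul]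

section Ultrametric

variable {K : Type*} [NormedField K] [IsUltrametricDist K]

lemma IsUltrametricDist.norm_add_pow_sub_pow_le {y z : K} (hy : ‖y‖ ≤ 1) (hz : ‖z‖ ≤ 1)
    (k : ℕ) : ‖(y + z) ^ k - y ^ k‖ ≤ ‖z‖ := by
  have hyz : ‖y + z‖ ≤ 1 := (norm_add_le_max y z).trans (max_le hy hz)
  rw [← geom_sum₂_mul, add_sub_cancel_left, norm_mul]
  refine mul_le_of_le_one_left (norm_nonneg z) ?_
  refine norm_sum_le_of_forall_le_of_nonneg zero_le_one fun i _ => ?_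
  rw [norm_mul, norm_pow, norm_pow]
  exact mul_le_one₀ (pow_le_one₀ (norm_nonneg _) hyz) (by positivity)
    (pow_le_one₀ (norm_nonneg _) hy)

lemma IsUltrametricDist.norm_sum_neg_one_pow_mul_add_mul_pow_sub_le {N : ℕ} (hN : Odd N)
    (a k : ℕ) {y z : K} (hy : ‖y‖ ≤ 1) (hz : ‖z‖ ≤ 1) :
    ‖∑ x ∈ range N, (-1 : K) ^ (a + x) * (y + z * x) ^ k - (-1) ^ a * y ^ k‖ ≤ ‖z‖ := by
  rw [sum_neg_one_pow_mul_sub_of_odd hN]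
  refine norm_sum_le_of_forall_le_of_nonneg (norm_nonneg z) fun x _ => ?_
  rw [norm_mul, norm_pow, norm_neg, norm_one, one_pow, one_mul]
  have hzx : ‖z * x‖ ≤ ‖z‖ := by
    rw [norm_mul]
    exact mul_le_of_le_one_right (norm_nonneg z) (norm_natCast_le_one K x)
  exact (norm_add_pow_sub_pow_le hy (hzx.trans hz) k).trans hzx

end Ultrametric

theorem fermionic_RN_derivative_monomial (p : ℕ) [hp : Fact p.Prime] (hodd : Odd p)
    (k a : ℕ) (μ : ℕ → ℚ_[p])
    (hμ : ∀ n, Tendsto (fun m => ∑ x ∈ Finset.range (p ^ (m - n)),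
        (-1 : ℚ_[p]) ^ (a % p ^ n + x)
          * (((a % p ^ n : ℕ) : ℚ_[p]) + (p : ℚ_[p]) ^ n * (x : ℚ_[p])) ^ k)
      atTop (nhds (μ n))) :
    Tendsto μ atTop (nhds ((-1 : ℚ_[p]) ^ a * (a : ℚ_[p]) ^ k)) := by
  rw [tendsto_iff_norm_sub_tendsto_zero]
  have hpow : Tendsto (fun n : ℕ => ‖(p : ℚ_[p])‖ ^ n) atTop (nhds 0) :=
    tendsto_pow_atTop_nhds_zero_of_lt_one (norm_nonneg _) Padic.norm_p_lt_one
  refine squeeze_zero' (Eventually.of_forall fun n => norm_nonneg _) ?_ hpow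
  filter_upwards [eventually_gt_atTop a] with n hn
  have hmod : a % p ^ n = a :=
    Nat.mod_eq_of_lt (hn.trans (Nat.lt_pow_self hp.out.one_lt))
  have hpn : ‖(p : ℚ_[p]) ^ n‖ ≤ 1 := by
    rw [norm_pow]
    exact pow_le_one₀ (norm_nonneg _) Padic.norm_p_lt_one.le
  have hpartial := fun m => IsUltrametricDist.norm_sum_neg_one_pow_mul_add_mul_pow_sub_le
    (hodd.pow (n := m - n)) a k (IsUltrametricDist.norm_natCast_le_one ℚ_[p] a) hpn
  rw [← norm_pow]
  refine le_of_tendsto ((hμ n).sub_const _).norm (Eventually.of_forall fun m => ?_)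
  simpa only [hmod] using hpartial m
end

section
/- Let p be an odd prime and k a natural number. For every continuous function g : ℤ_p → ℚ_p, the integral of g against the measure μ_{x^k,-1} equals the fermionic integral of g(x)·x^k: lim_{n→∞} ∑_{i=0}^{p^n-1} g(i)·μ_{x^k,-1}(i + p^n ℤ_p) = lim_{n→∞} ∑_{i=0}^{p^n-1} g(i)·i^k·(-1)^i, provided the right-hand limit exists. -/
/-!
Writing `j < p ^ m` as `j = i + p ^ n * x` with `i < p ^ n` (the sign survives since `p ^ n` is
odd), `∑ i < p ^ n, g i * μ n i` is the limit in `m` of `∑ j < p ^ m, g (j % p ^ n) * j ^ k * (-1) ^ j`.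
As `|j - j % p ^ n|_p ≤ p ^ (-n)` and `g` is uniformly continuous on the compact `ℤ_[p]`, these
sums differ from the fermionic sums `∑ j < p ^ m, g j * j ^ k * (-1) ^ j` termwise, hence (being
ultrametric) in total, by at most `ε` for all `m` once `n` is large.
-/

open Finset Filter Topology

theorem Finset.sum_range_mul_eq_sum_sum {M : Type*} [AddCommMonoid M] (F : ℕ → M) (a b : ℕ) :
    ∑ j ∈ range (a * b), F j = ∑ i ∈ range a, ∑ x ∈ range b, F (i + a * x) := by
  rw [sum_comm]
  induction b with
  | zero => simp
  | succ b ih =>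
    rw [Nat.mul_succ, sum_range_add, ih, sum_range_succ]
    simp only [add_comm]

theorem sum_mul_sum_neg_one_pow_mul_add_mul_pow {R : Type*} [CommRing R] (f : ℕ → R)
    {a : ℕ} (ha : Odd a) (b k : ℕ) :
    ∑ i ∈ range a, f i * ∑ x ∈ range b, (-1 : R) ^ (i + x) * ((i : R) + a * x) ^ k
      = ∑ j ∈ range (a * b), f (j % a) * ((j : R) ^ k * (-1) ^ j) := by
  rw [sum_range_mul_eq_sum_sum]
  refine sum_congr rfl fun i hi => ?_
  rw [mul_sum]
  refine sum_congr rfl fun x _ => ?_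
  have hmod : (i + a * x) % a = i := by
    rw [Nat.add_mul_mod_self_left, Nat.mod_eq_of_lt (mem_range.1 hi)]
  rw [hmod, pow_add, pow_add, pow_mul, ha.neg_one_pow]
  push_cast
  ring

theorem IsUltrametricDist.norm_sum_mul_sub_sum_mul_le {ι R : Type*} [SeminormedRing R]
    [IsUltrametricDist R] {s : Finset ι} {f g w : ι → R} {ε : ℝ} (hε : 0 ≤ ε)
    (hfg : ∀ i ∈ s, ‖f i - g i‖ ≤ ε) (hw : ∀ i ∈ s, ‖w i‖ ≤ 1) :
    ‖∑ i ∈ s, f i * w i - ∑ i ∈ s, g i * w i‖ ≤ ε := by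
  rw [← sum_sub_distrib]
  refine norm_sum_le_of_forall_le_of_nonneg hε fun i hi => ?_
  calc ‖f i * w i - g i * w i‖ = ‖(f i - g i) * w i‖ := by rw [sub_mul]
    _ ≤ ‖f i - g i‖ * ‖w i‖ := norm_mul_le _ _
    _ ≤ ε * 1 := mul_le_mul (hfg i hi) (hw i hi) (norm_nonneg _) hε
    _ = ε := mul_one ε

theorem IsUltrametricDist.norm_natCast_pow_mul_neg_one_pow_le_one {R : Type*}
    [NormedDivisionRing R] [IsUltrametricDist R] (j k : ℕ) : ‖(j : R) ^ k * (-1) ^ j‖ ≤ 1 := by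
  rw [norm_mul, norm_pow, norm_pow, norm_neg, norm_one, one_pow, mul_one]
  exact pow_le_one₀ (norm_nonneg _) (norm_natCast_le_one R j)

namespace PadicInt

variable {p : ℕ} [Fact p.Prime]

theorem dist_natCast_mod_pow_le (j n : ℕ) :
    dist ((j % p ^ n : ℕ) : ℤ_[p]) j ≤ (p : ℝ) ^ (-n : ℤ) := by
  have hdvd : ((p ^ n : ℕ) : ℤ) ∣ ((j % p ^ n : ℕ) : ℤ) - j :=
    Nat.modEq_iff_dvd.1 (Nat.mod_modEq j (p ^ n)).symm
  rw [dist_eq_norm]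
  exact_mod_cast norm_int_le_pow_iff_dvd.2 (by exact_mod_cast hdvd)

theorem eventually_dist_natCast_mod_pow_lt {E : Type*} [PseudoMetricSpace E] {g : ℤ_[p] → E}
    (hg : UniformContinuous g) {ε : ℝ} (hε : 0 < ε) :
    ∀ᶠ n in atTop, ∀ j : ℕ, dist (g ((j % p ^ n : ℕ) : ℤ_[p])) (g j) < ε := by
  obtain ⟨δ, hδ, hgδ⟩ := Metric.uniformContinuous_iff.1 hg ε hε
  have hp : (1 : ℝ) < p := mod_cast (Fact.out : p.Prime).one_lt
  have hpow : Tendsto (fun n : ℕ => (p : ℝ) ^ (-n : ℤ)) atTop (𝓝 0) := by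
    simpa only [zpow_neg, zpow_natCast, ← inv_pow] using
      tendsto_pow_atTop_nhds_zero_of_lt_one (by positivity) (inv_lt_one_of_one_lt₀ hp)
  filter_upwards [hpow.eventually_lt_const hδ] with n hn j
  exact hgδ ((dist_natCast_mod_pow_le j n).trans_lt hn)

end PadicInt

theorem integral_against_monomial_measure (p : ℕ) [hp : Fact p.Prime] (hodd : Odd p)
    (k : ℕ) (g : ℤ_[p] → ℚ_[p]) (hg : Continuous g)
    (μ : ℕ → ℕ → ℚ_[p])
    (hμ : ∀ n i : ℕ, Tendsto (fun m => ∑ x ∈ Finset.range (p ^ (m - n)),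
        (-1 : ℚ_[p]) ^ (i + x) * ((i : ℚ_[p]) + (p : ℚ_[p]) ^ n * (x : ℚ_[p])) ^ k)
      atTop (nhds (μ n i)))
    (L : ℚ_[p])
    (hL : Tendsto (fun n => ∑ i ∈ Finset.range (p ^ n),
        g (i : ℤ_[p]) * (i : ℚ_[p]) ^ k * (-1 : ℚ_[p]) ^ i) atTop (nhds L)) :
    Tendsto (fun n => ∑ i ∈ Finset.range (p ^ n), g (i : ℤ_[p]) * μ n i)
      atTop (nhds L) := by
  simp only [mul_assoc] at hL
  rw [Metric.tendsto_atTop]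
  intro ε hε
  obtain ⟨N, hN⟩ := eventually_atTop.1 <|
    PadicInt.eventually_dist_natCast_mod_pow_lt
      (CompactSpace.uniformContinuous_of_continuous hg) (half_pos hε)
  refine ⟨N, fun n hn => ?_⟩
  have hriemann : Tendsto (fun m => ∑ j ∈ range (p ^ m),
      g ((j % p ^ n : ℕ) : ℤ_[p]) * ((j : ℚ_[p]) ^ k * (-1) ^ j)) atTop
      (𝓝 (∑ i ∈ range (p ^ n), g i * μ n i)) := by
    refine (tendsto_finsetSum _ fun i _ => (hμ n i).const_mul _).congr' ?_
    filter_upwards [eventually_ge_atTop n] with m hm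
    rw [← pow_mul_pow_sub p hm, ← sum_mul_sum_neg_one_pow_mul_add_mul_pow (fun i : ℕ => g i) hodd.pow]
    push_cast
    rfl
  have hclose : ∀ m, ‖∑ j ∈ range (p ^ m), g ((j % p ^ n : ℕ) : ℤ_[p]) * ((j : ℚ_[p]) ^ k * (-1) ^ j)
      - ∑ j ∈ range (p ^ m), g j * ((j : ℚ_[p]) ^ k * (-1) ^ j)‖ ≤ ε / 2 := fun m =>
    IsUltrametricDist.norm_sum_mul_sub_sum_mul_le (half_pos hε).le
      (fun j _ => by rw [← dist_eq_norm]; exact (hN n hn j).le)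
      (fun j _ => IsUltrametricDist.norm_natCast_pow_mul_neg_one_pow_le_one j k)
  rw [dist_eq_norm]
  calc ‖∑ i ∈ range (p ^ n), g i * μ n i - L‖ ≤ ε / 2 :=
        le_of_tendsto (hriemann.sub hL).norm (Eventually.of_forall hclose)
    _ < ε := half_lt_self hε
end

section
/- Let p be an odd prime and f : ℤ_p → ℚ_p a uniformly differentiable function (so that lim n·‖a_n‖_p = 0 for its Mahler coefficients). Then for every a ∈ ℕ, f_{μ_{f,-1}}(a) := lim_{n→∞} μ_{f,-1}(a mod p^n + p^n ℤ_p) exists and equals (-1)^a·f(a), where μ_{f,-1}(b + p^n ℤ_p) = lim_{m→∞} ∑_{x=0, x≡b mod p^n}^{p^m-1} f(x)(-1)^x. -/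
/-!
Since `n ‖c n‖ → 0`, the Mahler coefficients tend to `0`, so the Mahler series converges uniformly
and `f` is continuous. For `a < p ^ n ≤ p ^ m`, the terms of the `m`-th sum are indexed by
`x = a + p ^ n y` with `y < p ^ (m - n)`, and since `p ^ n` is odd the sum equals
`(-1) ^ a ∑ (-1) ^ y f (a + p ^ n y)`. As `p ^ (m - n)` is odd the signs sum to `1`, so by the
ultrametric inequality the sum lies within `sup_y ‖f (a + p ^ n y) - f a‖` of `(-1) ^ a f a`, and
this bound tends to `0` with `n` by continuity of `f` at `a`.
-/

open Finset Filter

/-- The Mahler binomial coefficient function `C(x, n) = x(x-1)⋯(x-n+1)/n!` on `ℤ_p`,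
with values in `ℚ_p`. -/
noncomputable def mahlerBinom (p : ℕ) [Fact p.Prime] (x : ℤ_[p]) (n : ℕ) : ℚ_[p] :=
  (∏ i ∈ Finset.range n, ((x : ℚ_[p]) - (i : ℚ_[p]))) / (n.factorial : ℚ_[p])

lemma tendsto_zero_of_tendsto_natCast_mul_norm {E : Type*} [SeminormedAddCommGroup E]
    {c : ℕ → E} (h : Tendsto (fun n : ℕ => (n : ℝ) * ‖c n‖) atTop (nhds 0)) :
    Tendsto c atTop (nhds 0) := by
  refine tendsto_zero_iff_norm_tendsto_zero.2 <|
    squeeze_zero' (Eventually.of_forall fun _ => norm_nonneg _) ?_ h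
  filter_upwards [eventually_ge_atTop 1] with n hn
  exact le_mul_of_one_le_left (norm_nonneg _) (mod_cast hn)

section AlternatingSums

variable {R : Type*}

lemma sum_range_mul_ite_mod_eq [AddCommMonoid R] {d r : ℕ} (hr : r < d) (g : ℕ → R) (q : ℕ) :
    ∑ x ∈ range (d * q), (if x % d = r then g x else 0) = ∑ y ∈ range q, g (r + d * y) := by
  induction q with
  | zero => simp
  | succ q ih =>
    rw [mul_add_one, sum_range_add, ih, sum_range_succ]
    congr 1
    rw [sum_congr rfl fun k hk => by
        rw [Nat.mul_add_mod_self_left, Nat.mod_eq_of_lt (mem_range.1 hk)],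
      sum_ite_eq', if_pos (mem_range.2 hr), add_comm]

lemma sum_ite_mod_mul_neg_one_pow [CommRing R] {d r : ℕ} (hd : Odd d) (hr : r < d)
    (g : ℕ → R) (q : ℕ) :
    ∑ x ∈ range (d * q), (if x % d = r then g x * (-1) ^ x else 0) =
      (-1) ^ r * ∑ y ∈ range q, (-1) ^ y * g (r + d * y) := by
  rw [sum_range_mul_ite_mod_eq hr, mul_sum]
  refine sum_congr rfl fun y _ => ?_
  rw [pow_add, pow_mul, hd.neg_one_pow]
  ring

lemma norm_sum_neg_one_pow_mul_sub_le [NormedCommRing R] [NormMulClass R] [NormOneClass R]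
    [IsUltrametricDist R] {q : ℕ} (hq : Odd q) {g : ℕ → R} {g₀ : R} {ε : ℝ}
    (h : ∀ y, ‖g y - g₀‖ ≤ ε) :
    ‖∑ y ∈ range q, (-1) ^ y * g y - g₀‖ ≤ ε := by
  have hsigns : ∑ y ∈ range q, (-1 : R) ^ y = 1 := by
    rw [neg_one_geom_sum, if_neg (Nat.not_even_iff_odd.2 hq)]
  have hsplit : ∑ y ∈ range q, (-1) ^ y * g y - g₀ = ∑ y ∈ range q, (-1) ^ y * (g y - g₀) := by
    simp only [mul_sub, sum_sub_distrib, ← sum_mul, hsigns, one_mul]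
  rw [hsplit]
  refine IsUltrametricDist.norm_sum_le_of_forall_le_of_nonneg ((norm_nonneg _).trans (h 0))
    fun y _ => ?_
  simpa only [norm_mul, norm_pow, norm_neg, norm_one, one_pow, one_mul] using h y

lemma norm_sum_ite_mod_mul_neg_one_pow_sub_le [NormedCommRing R] [NormMulClass R]
    [NormOneClass R] [IsUltrametricDist R] {d r q : ℕ} (hd : Odd d) (hq : Odd q) (hr : r < d)
    {g : ℕ → R} {ε : ℝ} (h : ∀ y, ‖g (r + d * y) - g r‖ ≤ ε) :
    ‖∑ x ∈ range (d * q), (if x % d = r then g x * (-1) ^ x else 0) - (-1) ^ r * g r‖ ≤ ε := by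
  rw [sum_ite_mod_mul_neg_one_pow hd hr, ← mul_sub, norm_mul, norm_pow, norm_neg, norm_one,
    one_pow, one_mul]
  exact norm_sum_neg_one_pow_mul_sub_le hq h

end AlternatingSums

section Padic

open PadicInt

variable {p : ℕ} [Fact p.Prime]

instance PadicInt.isBoundedSMul_padic : IsBoundedSMul ℤ_[p] ℚ_[p] :=
  IsBoundedSMul.of_norm_smul_le fun x y => by
    rw [Algebra.smul_def, norm_mul]
    rfl

lemma coe_mahler_apply (k : ℕ) (x : ℤ_[p]) :
    ((mahler k x : ℤ_[p]) : ℚ_[p]) = mahlerBinom p x k := by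
  -- the coercion `ℤ_[p] → ℚ_[p]` is `PadicInt.Coe.ringHom` up to unfolding
  change PadicInt.Coe.ringHom (Ring.choose x k) = _
  rw [Ring.map_choose]
  change Ring.choose (x : ℚ_[p]) k = _
  rw [Ring.choose_eq_smul, mahlerBinom, ← descPochhammer_eval_eq_prod_range, smul_eq_mul,
    div_eq_inv_mul, ← descPochhammer_map (Int.castRingHom ℚ_[p]), Polynomial.eval_map,
    ← Polynomial.eval₂_smulOneHom_eq_smeval,
    Subsingleton.elim RingHom.smulOneHom (Int.castRingHom _)]

lemma eq_mahlerSeries_of_tendsto {f : ℤ_[p] → ℚ_[p]} {c : ℕ → ℚ_[p]}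
    (hc : Tendsto c atTop (nhds 0))
    (hf : ∀ x, Tendsto (fun N => ∑ n ∈ range (N + 1), c n * mahlerBinom p x n) atTop
      (nhds (f x))) :
    f = (mahlerSeries c : C(ℤ_[p], ℚ_[p])) := by
  funext x
  have hsum := ContinuousMap.hasSum_apply (hasSum_mahlerSeries hc) x
  refine tendsto_nhds_unique (hf x) ?_
  have hterm (n : ℕ) : mahlerTerm (c n) n x = c n * mahlerBinom p x n := by
    rw [mahlerTerm_apply, Algebra.smul_def, PadicInt.algebraMap_apply, coe_mahler_apply, mul_comm]
  simp only [hterm] at hsum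
  exact hsum.tendsto_sum_nat.comp (tendsto_add_atTop_nat 1)

lemma PadicInt.eventually_forall_dist_add_prime_pow_mul_le {E : Type*} [PseudoMetricSpace E]
    {f : ℤ_[p] → E} {x : ℤ_[p]} (hf : ContinuousAt f x) {ε : ℝ}
    (hε : 0 < ε) : ∀ᶠ n in atTop, ∀ y : ℤ_[p], dist (f (x + p ^ n * y)) (f x) ≤ ε := by
  obtain ⟨δ, hδ, hfδ⟩ := Metric.continuousAt_iff.1 hf ε hε
  have hp_lt_one : ‖(p : ℤ_[p])‖ < 1 := by
    rw [PadicInt.norm_p]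
    exact inv_lt_one_of_one_lt₀ (mod_cast (Fact.out : p.Prime).one_lt)
  have hsmall : ∀ᶠ n in atTop, ‖(p : ℤ_[p])‖ ^ n < δ :=
    (tendsto_pow_atTop_nhds_zero_of_lt_one (norm_nonneg _) hp_lt_one).eventually
      (gt_mem_nhds hδ)
  filter_upwards [hsmall] with n hn y
  refine (hfδ ?_).le
  calc dist (x + p ^ n * y) x = ‖(p : ℤ_[p]) ^ n * y‖ := by
        rw [dist_eq_norm, add_sub_cancel_left]
    _ ≤ ‖(p : ℤ_[p])‖ ^ n := by
      rw [norm_mul, norm_pow]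
      exact mul_le_of_le_one_right (by positivity) (PadicInt.norm_le_one y)
    _ < δ := hn

end Padic

theorem fermionic_RN_derivative_UD (p : ℕ) [hp : Fact p.Prime] (hodd : Odd p)
    (f : ℤ_[p] → ℚ_[p]) (c : ℕ → ℚ_[p])
    (hf : ∀ x : ℤ_[p], Tendsto (fun N => ∑ n ∈ Finset.range (N + 1),
        c n * mahlerBinom p x n) atTop (nhds (f x)))
    (hUD : Tendsto (fun n : ℕ => (n : ℝ) * ‖c n‖) atTop (nhds 0))
    (a : ℕ) (μ : ℕ → ℚ_[p])
    (hμ : ∀ n, Tendsto (fun m => ∑ x ∈ Finset.range (p ^ m),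
        if x % p ^ n = a % p ^ n then f (x : ℤ_[p]) * (-1 : ℚ_[p]) ^ x else 0)
      atTop (nhds (μ n))) :
    Tendsto μ atTop (nhds ((-1 : ℚ_[p]) ^ a * f (a : ℤ_[p]))) := by
  have hcont : Continuous f :=
    eq_mahlerSeries_of_tendsto (tendsto_zero_of_tendsto_natCast_mul_norm hUD) hf ▸
      (PadicInt.mahlerSeries c).continuous
  rw [Metric.nhds_basis_closedBall.tendsto_right_iff]
  intro ε hε
  filter_upwards [PadicInt.eventually_forall_dist_add_prime_pow_mul_le hcont.continuousAt hε,
    (tendsto_pow_atTop_atTop_of_one_lt hp.out.one_lt).eventually_gt_atTop a] with n hclose ha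
  refine Metric.isClosed_closedBall.mem_of_tendsto (hμ n) ?_
  filter_upwards [eventually_ge_atTop n] with m hm
  rw [← pow_mul_pow_sub p hm, Nat.mod_eq_of_lt ha, Metric.mem_closedBall, dist_eq_norm]
  refine norm_sum_ite_mod_mul_neg_one_pow_sub_le (g := fun x : ℕ => f x) hodd.pow hodd.pow ha
    fun y => ?_
  simpa [dist_eq_norm] using hclose y
end

section
/- Let p be an odd prime. For any natural numbers k ≥ 1 and m ≥ n, the difference ∑_{i=0}^{p^{m+1}-1}(-1)^i i^k − ∑_{i=0}^{p^m-1}(-1)^i i^k is divisible by p^m in ℤ, i.e., ‖∑_{i=0}^{p^{m+1}-1}(-1)^i i^k − ∑_{i=0}^{p^m-1}(-1)^i i^k‖_p ≤ p^{-m}. -/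
open Finset

/-!
Modulo an odd `N`, the map `i ↦ (-1)^i i^k` is antiperiodic with antiperiod `N`. Hence a sum over
an odd number `q` of consecutive blocks of length `N` reduces, after adjacent blocks cancel in
pairs, to the first block; take `N = p^m` and `q = p`.
-/

theorem Function.Antiperiodic.sum_range_odd_mul {M : Type*} [AddCommGroup M] {f : ℕ → M}
    {N q : ℕ} (hf : Function.Antiperiodic f N) (hq : Odd q) :
    ∑ i ∈ range (q * N), f i = ∑ i ∈ range N, f i := by
  obtain ⟨t, rfl⟩ := hq
  induction t with
  | zero => simp
  | succ t ih =>
    have hcancel : ∑ i ∈ range N, f ((2 * t + 1) * N + N + i) =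
        -∑ i ∈ range N, f ((2 * t + 1) * N + i) := by
      rw [← sum_neg_distrib]
      exact sum_congr rfl fun i _ => by rw [add_right_comm, hf]
    rw [show (2 * (t + 1) + 1) * N = (2 * t + 1) * N + N + N by ring, sum_range_add,
      sum_range_add, hcancel, add_neg_cancel_right, ih]

theorem ZMod.antiperiodic_neg_one_pow_mul_natCast_pow {N : ℕ} (hN : Odd N) (k : ℕ) :
    Function.Antiperiodic (fun i : ℕ => (-1 : ZMod N) ^ i * (i : ZMod N) ^ k) N := by
  intro i
  simp [pow_add, hN.neg_one_pow]

theorem dvd_alt_power_sum_odd_mul_sub {N q : ℕ} (hN : Odd N) (hq : Odd q) (k : ℕ) :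
    (N : ℤ) ∣ ∑ i ∈ range (q * N), (-1 : ℤ) ^ i * (i : ℤ) ^ k
      - ∑ i ∈ range N, (-1 : ℤ) ^ i * (i : ℤ) ^ k := by
  rw [← ZMod.intCast_zmod_eq_zero_iff_dvd]
  push_cast
  rw [(ZMod.antiperiodic_neg_one_pow_mul_natCast_pow hN k).sum_range_odd_mul hq, sub_self]

theorem alt_power_sum_cauchy_general (p : ℕ) [hp : Fact p.Prime] (hodd : Odd p)
    (k : ℕ) (m : ℕ) :
    ‖(∑ i ∈ Finset.range (p ^ (m + 1)), (-1 : ℚ_[p]) ^ i * (i : ℚ_[p]) ^ k)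
      - ∑ i ∈ Finset.range (p ^ m), (-1 : ℚ_[p]) ^ i * (i : ℚ_[p]) ^ k‖
      ≤ (p : ℝ) ^ (-(m : ℤ)) := by
  have hdvd := dvd_alt_power_sum_odd_mul_sub hodd.pow hodd k (N := p ^ m)
  rw [← pow_succ', Nat.cast_pow, ← Padic.norm_int_le_pow_iff_dvd] at hdvd
  exact_mod_cast hdvd

theorem alt_power_sum_cauchy (p : ℕ) [hp : Fact p.Prime] (hodd : Odd p)
    (k : ℕ) (hk : 1 ≤ k) (m : ℕ) :
    ‖(∑ i ∈ Finset.range (p ^ (m + 1)), (-1 : ℚ_[p]) ^ i * (i : ℚ_[p]) ^ k)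
      - ∑ i ∈ Finset.range (p ^ m), (-1 : ℚ_[p]) ^ i * (i : ℚ_[p]) ^ k‖
      ≤ (p : ℝ) ^ (-(m : ℤ)) :=
  alt_power_sum_cauchy_general p (hp := hp) hodd k m
end
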